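/- arXiv:1307.0365 — 3 statements merged into one kernel-verified Lean document; each statement's English description precedes it below -/
import Mathlib

section
/- Let q : ℝ → ℝ be continuous on [0, h₁] with q₁ = ∫₀^{h₁} |q(τ)| dτ, let Δ : ℝ → ℝ with 0 ≤ τ - Δ(τ) for τ ∈ [0, h₁], and let w : ℝ → ℝ be continuous on [0, h₁] satisfying for all x ∈ [0, h₁]: w(x) = -sin(μx) + cos(μx) - (1/μ) ∫₀^x q(τ) sin(μ(x - τ)) w(τ - Δ(τ)) dτ, where τ - Δ(τ) ∈ [0, h₁] for all τ ∈ [0, h₁]. If μ ≥ 2q₁ and μ > 0, then |w(x)| ≤ 2√2 for all x ∈ [0, h₁]. -/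
theorem stmt_5 (h₁ μ q₁ : ℝ) (q Δ w : ℝ → ℝ)
    (hh₁ : 0 < h₁)
    (hqcont : ContinuousOn q (Set.Icc 0 h₁))
    (hq₁ : q₁ = ∫ τ in (0:ℝ)..h₁, |q τ|)
    (hmap : ∀ τ ∈ Set.Icc (0:ℝ) h₁, τ - Δ τ ∈ Set.Icc (0:ℝ) h₁)
    (hwcont : ContinuousOn w (Set.Icc 0 h₁))
    (heq : ∀ x ∈ Set.Icc (0:ℝ) h₁,
      w x = -Real.sin (μ * x) + Real.cos (μ * x)
        - (1 / μ) * ∫ τ in (0:ℝ)..x,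
            q τ * Real.sin (μ * (x - τ)) * w (τ - Δ τ))
    (hμq : μ ≥ 2 * q₁) (hμ : 0 < μ) :
    ∀ x ∈ Set.Icc (0:ℝ) h₁, |w x| ≤ 2 * Real.sqrt 2 := by
  obtain ⟨x₀, hx₀, hmax⟩ := isCompact_Icc.exists_isMaxOn
    (Set.nonempty_Icc.mpr hh₁.le) hwcont.abs
  set M := |w x₀| with hMdef
  have hmax' : ∀ x ∈ Set.Icc (0:ℝ) h₁, |w x| ≤ M := fun x hx => hmax hx
  have hM0 : 0 ≤ M := abs_nonneg _
  have hq₁0 : 0 ≤ q₁ := by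
    rw [hq₁]
    exact intervalIntegral.integral_nonneg hh₁.le (fun τ _ => abs_nonneg _)
  have hsqrt2 : (0:ℝ) ≤ Real.sqrt 2 := Real.sqrt_nonneg 2
  -- |q| is interval integrable on [0, h₁]
  have habsq : IntervalIntegrable (fun τ => |q τ|) MeasureTheory.volume 0 h₁ := by
    apply ContinuousOn.intervalIntegrable
    rw [Set.uIcc_of_le hh₁.le]
    exact hqcont.abs
  -- the elementary trig bound
  have hsin : ∀ θ : ℝ, |(-Real.sin θ + Real.cos θ)| ≤ Real.sqrt 2 := by
    intro θ
    rw [← Real.sqrt_sq_eq_abs]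
    apply Real.sqrt_le_sqrt
    nlinarith [Real.sin_sq_add_cos_sq θ, sq_nonneg (Real.sin θ + Real.cos θ)]
  -- the integral bound
  have hI : ∀ x ∈ Set.Icc (0:ℝ) h₁,
      |∫ τ in (0:ℝ)..x, q τ * Real.sin (μ * (x - τ)) * w (τ - Δ τ)| ≤ q₁ * M := by
    intro x hx
    obtain ⟨hx0, hxh⟩ := hx
    by_cases hint : IntervalIntegrable
        (fun τ => q τ * Real.sin (μ * (x - τ)) * w (τ - Δ τ)) MeasureTheory.volume 0 x
    · have habsqx : IntervalIntegrable (fun τ => |q τ|) MeasureTheory.volume 0 x :=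
        habsq.mono_set (by
          rw [Set.uIcc_of_le hx0, Set.uIcc_of_le hh₁.le]
          exact Set.Icc_subset_Icc le_rfl hxh)
      have habsqMx : IntervalIntegrable (fun τ => |q τ| * M) MeasureTheory.volume 0 x :=
        habsqx.mul_const M
      calc |∫ τ in (0:ℝ)..x, q τ * Real.sin (μ * (x - τ)) * w (τ - Δ τ)|
          ≤ ∫ τ in (0:ℝ)..x, |q τ * Real.sin (μ * (x - τ)) * w (τ - Δ τ)| :=
            intervalIntegral.abs_integral_le_integral_abs hx0
        _ ≤ ∫ τ in (0:ℝ)..x, |q τ| * M := by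
            apply intervalIntegral.integral_mono_on hx0 hint.abs habsqMx
            intro τ hτ
            have hτ' : τ ∈ Set.Icc (0:ℝ) h₁ := ⟨hτ.1, hτ.2.trans hxh⟩
            have hw : |w (τ - Δ τ)| ≤ M := hmax' _ (hmap τ hτ')
            have hs : |Real.sin (μ * (x - τ))| ≤ 1 := Real.abs_sin_le_one _
            calc |q τ * Real.sin (μ * (x - τ)) * w (τ - Δ τ)|
                = |q τ| * |Real.sin (μ * (x - τ))| * |w (τ - Δ τ)| := by
                  rw [abs_mul, abs_mul]
              _ ≤ |q τ| * 1 * M := by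
                  apply mul_le_mul _ hw (abs_nonneg _) (by positivity)
                  exact mul_le_mul_of_nonneg_left hs (abs_nonneg _)
              _ = |q τ| * M := by ring
        _ = (∫ τ in (0:ℝ)..x, |q τ|) * M := by
            rw [intervalIntegral.integral_mul_const]
        _ ≤ q₁ * M := by
            apply mul_le_mul_of_nonneg_right _ hM0
            rw [hq₁]
            apply intervalIntegral.integral_mono_interval le_rfl hx0 hxh
            · filter_upwards with τ using abs_nonneg _
            · exact habsq
    · rw [intervalIntegral.integral_undef hint]
      simp only [abs_zero]
      positivity
  -- main bound on M
  have hMbound : M ≤ 2 * Real.sqrt 2 := by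
    have h1 : M ≤ Real.sqrt 2 + (1 / μ) * (q₁ * M) := by
      conv_lhs => rw [hMdef, heq x₀ hx₀]
      calc |(-Real.sin (μ * x₀) + Real.cos (μ * x₀))
              - (1 / μ) * ∫ τ in (0:ℝ)..x₀, q τ * Real.sin (μ * (x₀ - τ)) * w (τ - Δ τ)|
          ≤ |(-Real.sin (μ * x₀) + Real.cos (μ * x₀))|
              + |(1 / μ) * ∫ τ in (0:ℝ)..x₀, q τ * Real.sin (μ * (x₀ - τ)) * w (τ - Δ τ)| :=
            abs_sub _ _
        _ ≤ Real.sqrt 2 + (1 / μ) * (q₁ * M) := by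
            apply add_le_add (hsin _)
            rw [abs_mul, abs_of_pos (by positivity : (0:ℝ) < 1 / μ)]
            exact mul_le_mul_of_nonneg_left (hI x₀ hx₀) (by positivity)
    have h2 : (1 / μ) * q₁ ≤ 1 / 2 := by
      rw [div_mul_eq_mul_div, one_mul, div_le_div_iff₀ hμ (by norm_num)]
      linarith
    nlinarith
  intro x hx
  exact (hmax' x hx).trans hMbound
end

section
/- Let f : ℝ → ℝ be a twice continuously differentiable solution on [0, h₁] of f''(x) + q(x) f(g(x)) + μ² f(x) = 0, where g(x) = x - Δ(x) maps [0, h₁] into [0, h₁], with f(0) = 1 and f'(0) = -μ. Then for all x ∈ [0, h₁]: f(x) = -sin(μx) + cos(μx) - (1/μ) ∫₀^x q(τ) sin(μ(x - τ)) f(g(τ)) dτ, assuming μ ≠ 0. -/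
/-! Variation of constants for `y'' + μ² y = s`: the derivative of
`t ↦ f' t * sin (μ (x - t)) + μ f t * cos (μ (x - t))` is `(f'' t + μ² f t) * sin (μ (x - t))`,
so integrating over `[0, x]` expresses `μ f x` through the initial data and the forcing term,
which the delay equation identifies with `-q τ f (τ - Δ τ)`. -/

open Set Real intervalIntegral

theorem hasDerivAt_duhamel_kernel {μ b t : ℝ} {f f' f'' : ℝ → ℝ}
    (hf : HasDerivAt f (f' t) t) (hf' : HasDerivAt f' (f'' t) t) :
    HasDerivAt (fun u => f' u * sin (μ * (b - u)) + μ * (f u * cos (μ * (b - u))))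
      ((f'' t + μ ^ 2 * f t) * sin (μ * (b - t))) t := by
  have hlin : HasDerivAt (fun u => μ * (b - u)) (-μ) t := by
    simpa using ((hasDerivAt_id t).const_sub b).const_mul μ
  have hsin := (hasDerivAt_sin _).comp t hlin
  have hcos := (hasDerivAt_cos _).comp t hlin
  exact ((hf'.mul hsin).add ((hf.mul hcos).const_mul μ)).congr_deriv
    (by simp only [Function.comp_apply]; ring)

theorem integral_mul_sin_mul_sub_eq_of_hasDerivAt {μ a b : ℝ} {f f' f'' : ℝ → ℝ}
    (hf : ∀ t ∈ uIcc a b, HasDerivAt f (f' t) t)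
    (hf' : ∀ t ∈ uIcc a b, HasDerivAt f' (f'' t) t)
    (hcont : ContinuousOn (fun t => f'' t + μ ^ 2 * f t) (uIcc a b)) :
    ∫ t in a..b, (f'' t + μ ^ 2 * f t) * sin (μ * (b - t)) =
      μ * f b - μ * f a * cos (μ * (b - a)) - f' a * sin (μ * (b - a)) := by
  have hsin : Continuous fun t => sin (μ * (b - t)) := by fun_prop
  rw [integral_eq_sub_of_hasDerivAt (fun t ht => hasDerivAt_duhamel_kernel (hf t ht) (hf' t ht))
    ((hcont.mul hsin.continuousOn).intervalIntegrable)]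
  simp only [sub_self, mul_zero, sin_zero, cos_zero]
  ring

theorem stmt_7_general (h₁ μ : ℝ) (q Δ f f' f'' : ℝ → ℝ)
    (hμ : μ ≠ 0)
    (hf'cont : ContinuousOn f'' (Set.Icc 0 h₁))
    (hd1 : ∀ x ∈ Set.Icc (0:ℝ) h₁, HasDerivAt f (f' x) x)
    (hd2 : ∀ x ∈ Set.Icc (0:ℝ) h₁, HasDerivAt f' (f'' x) x)
    (hode : ∀ x ∈ Set.Icc (0:ℝ) h₁,
      f'' x + q x * f (x - Δ x) + μ ^ 2 * f x = 0)
    (hf0 : f 0 = 1) (hf'0 : f' 0 = -μ) :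
    ∀ x ∈ Set.Icc (0:ℝ) h₁,
      f x = -Real.sin (μ * x) + Real.cos (μ * x)
        - (1 / μ) * ∫ τ in (0:ℝ)..x,
            q τ * Real.sin (μ * (x - τ)) * f (τ - Δ τ) := by
  intro x hx
  have hsub : uIcc 0 x ⊆ Icc 0 h₁ := uIcc_of_le hx.1 ▸ Icc_subset_Icc le_rfl hx.2
  have hfcont : ContinuousOn f (Icc 0 h₁) := fun t ht => (hd1 t ht).continuousAt.continuousWithinAt
  have hduhamel := integral_mul_sin_mul_sub_eq_of_hasDerivAt (μ := μ)
    (fun t ht => hd1 t (hsub ht)) (fun t ht => hd2 t (hsub ht))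
    ((hf'cont.add (continuousOn_const.mul hfcont)).mono hsub)
  have hforcing : ∫ τ in (0:ℝ)..x, q τ * sin (μ * (x - τ)) * f (τ - Δ τ) =
      -∫ τ in (0:ℝ)..x, (f'' τ + μ ^ 2 * f τ) * sin (μ * (x - τ)) := by
    rw [← integral_neg]
    refine integral_congr fun τ hτ => ?_
    linear_combination sin (μ * (x - τ)) * hode τ (hsub hτ)
  rw [hforcing, hduhamel, hf0, hf'0, sub_zero]
  field_simp
  ring

theorem stmt_7 (h₁ μ : ℝ) (q Δ f f' f'' : ℝ → ℝ)
    (hh₁ : 0 < h₁) (hμ : μ ≠ 0)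
    (hqcont : ContinuousOn q (Set.Icc 0 h₁))
    (hf'cont : ContinuousOn f'' (Set.Icc 0 h₁))
    (hd1 : ∀ x ∈ Set.Icc (0:ℝ) h₁, HasDerivAt f (f' x) x)
    (hd2 : ∀ x ∈ Set.Icc (0:ℝ) h₁, HasDerivAt f' (f'' x) x)
    (hg : ∀ x ∈ Set.Icc (0:ℝ) h₁, x - Δ x ∈ Set.Icc (0:ℝ) h₁)
    (hode : ∀ x ∈ Set.Icc (0:ℝ) h₁,
      f'' x + q x * f (x - Δ x) + μ ^ 2 * f x = 0)
    (hf0 : f 0 = 1) (hf'0 : f' 0 = -μ) :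
    ∀ x ∈ Set.Icc (0:ℝ) h₁,
      f x = -Real.sin (μ * x) + Real.cos (μ * x)
        - (1 / μ) * ∫ τ in (0:ℝ)..x,
            q τ * Real.sin (μ * (x - τ)) * f (τ - Δ τ) :=
  stmt_7_general h₁ μ q Δ f f' f'' hμ hf'cont hd1 hd2 hode hf0 hf'0
end

section
/- Let w : ℝ → ℝ be continuous on [h₂, π] satisfying w(x) = (1/θ) A cos(μ(x - h₂)) + (B/(μθ)) sin(μ(x - h₂)) - (1/μ) ∫_{h₂}^x q(τ) sin(μ(x - τ)) w(g(τ)) dτ for x ∈ [h₂, π], where g maps [h₂, π] into [h₂, π], |A| ≤ 8√2/|δ|, |B|/μ ≤ 8√2/|δ|, q continuous with ∫_{h₂}^π |q| = q₃, θ, δ ≠ 0. If μ ≥ 2q₃ and μ > 0, then |w(x)| ≤ 32√2/(|δθ|) for all x ∈ [h₂, π]. -/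
/-!
Let `M` be the maximum of `|w|` on `[h₂, π]`. In the integral equation the two free terms are each
at most `8√2 / |δθ|`, while `|sin| ≤ 1` bounds the Volterra term by `q₃ M / μ ≤ M / 2`. Applied at
a point where `|w| = M`, this gives `M ≤ 16√2 / |δθ| + M / 2`.
-/

open Set intervalIntegral

theorem abs_le_two_mul_of_forall_abs_le_add_half {X : Type*} [TopologicalSpace X] {S : Set X}
    (hS : IsCompact S) {u : X → ℝ} (hu : ContinuousOn u S) {C : ℝ}
    (h : ∀ M, (∀ y ∈ S, |u y| ≤ M) → ∀ x ∈ S, |u x| ≤ C + M / 2) :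
    ∀ x ∈ S, |u x| ≤ 2 * C := by
  intro x hx
  obtain ⟨c, hc, hmax⟩ := hS.exists_isMaxOn ⟨x, hx⟩ hu.abs
  have hx_le : |u x| ≤ |u c| := hmax hx
  have hc_le := h |u c| (fun y hy => hmax hy) c hc
  linarith

theorem abs_mul_cos_add_mul_sin_le (a b t : ℝ) :
    |a * Real.cos t + b * Real.sin t| ≤ |a| + |b| :=
  calc |a * Real.cos t + b * Real.sin t|
      ≤ |a| * |Real.cos t| + |b| * |Real.sin t| := by
        simpa only [abs_mul] using abs_add_le (a * Real.cos t) (b * Real.sin t)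
    _ ≤ |a| * 1 + |b| * 1 := by
        gcongr
        exacts [Real.abs_cos_le_one t, Real.abs_sin_le_one t]
    _ = |a| + |b| := by ring

theorem abs_intervalIntegral_mul_le {q k : ℝ → ℝ} {a b M : ℝ} (hab : a ≤ b)
    (hq : IntervalIntegrable q MeasureTheory.volume a b) (hk : ∀ τ ∈ Ioc a b, |k τ| ≤ M) :
    |∫ τ in a..b, q τ * k τ| ≤ (∫ τ in a..b, |q τ|) * M := by
  rw [← integral_mul_const M (fun τ => |q τ|)]
  refine norm_integral_le_of_norm_le (f := fun τ => q τ * k τ) hab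
    (Filter.Eventually.of_forall fun τ hτ => ?_) (hq.norm.mul_const M)
  rw [Real.norm_eq_abs, abs_mul]
  exact mul_le_mul_of_nonneg_left (hk τ hτ) (abs_nonneg _)

theorem abs_integral_mul_sin_mul_le {q f : ℝ → ℝ} {a b x μ M : ℝ}
    (hq : ContinuousOn q (Icc a b)) (hx : x ∈ Icc a b) (hM : 0 ≤ M)
    (hf : ∀ τ ∈ Ioc a x, |f τ| ≤ M) :
    |∫ τ in a..x, q τ * Real.sin (μ * (x - τ)) * f τ| ≤ (∫ τ in a..b, |q τ|) * M := by
  simp only [mul_assoc]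
  refine (abs_intervalIntegral_mul_le (M := M) hx.1
    ((hq.mono (Icc_subset_Icc le_rfl hx.2)).intervalIntegrable_of_Icc hx.1)
    fun τ hτ => ?_).trans ?_
  · rw [abs_mul, ← one_mul M]
    exact mul_le_mul (Real.abs_sin_le_one _) (hf τ hτ) (abs_nonneg _) zero_le_one
  · gcongr
    exact integral_mono_interval le_rfl hx.1 hx.2
      (Filter.Eventually.of_forall fun τ => abs_nonneg _)
      (hq.abs.intervalIntegrable_of_Icc (hx.1.trans hx.2))

theorem stmt_19_general (h₂ μ q₃ A B θ δ : ℝ) (q g w : ℝ → ℝ)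
    (hwcont : ContinuousOn w (Set.Icc h₂ Real.pi))
    (hqcont : ContinuousOn q (Set.Icc h₂ Real.pi))
    (hq₃ : q₃ = ∫ τ in h₂..Real.pi, |q τ|)
    (hg : ∀ τ ∈ Set.Icc h₂ Real.pi, g τ ∈ Set.Icc h₂ Real.pi)
    (hA : |A| ≤ 8 * Real.sqrt 2 / |δ|)
    (hB : |B| / μ ≤ 8 * Real.sqrt 2 / |δ|)
    (heq : ∀ x ∈ Set.Icc h₂ Real.pi,
      w x = (1 / θ) * A * Real.cos (μ * (x - h₂))
        + (B / (μ * θ)) * Real.sin (μ * (x - h₂))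
        - (1 / μ) * ∫ τ in h₂..x, q τ * Real.sin (μ * (x - τ)) * w (g τ))
    (hμq : μ ≥ 2 * q₃) (hμ : 0 < μ) :
    ∀ x ∈ Set.Icc h₂ Real.pi, |w x| ≤ 32 * Real.sqrt 2 / |δ * θ| := by
  have hC : 32 * Real.sqrt 2 / |δ * θ| = 2 * (16 * Real.sqrt 2 / |δ * θ|) := by ring
  rw [hC]
  refine abs_le_two_mul_of_forall_abs_le_add_half isCompact_Icc hwcont fun M hM x hx => ?_
  have hM0 : 0 ≤ M := (abs_nonneg _).trans (hM x hx)
  have hfree : |(1 / θ) * A * Real.cos (μ * (x - h₂)) + (B / (μ * θ)) * Real.sin (μ * (x - h₂))|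
      ≤ 16 * Real.sqrt 2 / |δ * θ| := by
    refine (abs_mul_cos_add_mul_sin_le _ _ _).trans ?_
    rw [one_div_mul_eq_div, abs_div, abs_div, abs_mul, abs_mul, abs_of_pos hμ, ← div_div]
    calc |A| / |θ| + |B| / μ / |θ|
        ≤ 8 * Real.sqrt 2 / |δ| / |θ| + 8 * Real.sqrt 2 / |δ| / |θ| := by gcongr
      _ = 16 * Real.sqrt 2 / (|δ| * |θ|) := by ring
  have hint : |∫ τ in h₂..x, q τ * Real.sin (μ * (x - τ)) * w (g τ)| ≤ q₃ * M :=
    hq₃ ▸ abs_integral_mul_sin_mul_le hqcont hx hM0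
      fun τ hτ => hM _ (hg τ ⟨hτ.1.le, hτ.2.trans hx.2⟩)
  calc |w x| ≤ 16 * Real.sqrt 2 / |δ * θ| + 1 / μ * (q₃ * M) := by
        rw [heq x hx]
        refine (abs_sub _ _).trans (add_le_add hfree ?_)
        rw [abs_mul, abs_of_pos (one_div_pos.mpr hμ)]
        exact mul_le_mul_of_nonneg_left hint (one_div_pos.mpr hμ).le
    _ ≤ 16 * Real.sqrt 2 / |δ * θ| + M / 2 := by
        gcongr
        rw [one_div_mul_eq_div, div_le_div_iff₀ hμ two_pos]
        nlinarith

theorem stmt_19 (h₂ μ q₃ A B θ δ : ℝ) (q g w : ℝ → ℝ)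
    (hh : h₂ < Real.pi) (hθ : θ ≠ 0) (hδ : δ ≠ 0)
    (hwcont : ContinuousOn w (Set.Icc h₂ Real.pi))
    (hqcont : ContinuousOn q (Set.Icc h₂ Real.pi))
    (hq₃ : q₃ = ∫ τ in h₂..Real.pi, |q τ|)
    (hg : ∀ τ ∈ Set.Icc h₂ Real.pi, g τ ∈ Set.Icc h₂ Real.pi)
    (hA : |A| ≤ 8 * Real.sqrt 2 / |δ|)
    (hB : |B| / μ ≤ 8 * Real.sqrt 2 / |δ|)
    (heq : ∀ x ∈ Set.Icc h₂ Real.pi,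
      w x = (1 / θ) * A * Real.cos (μ * (x - h₂))
        + (B / (μ * θ)) * Real.sin (μ * (x - h₂))
        - (1 / μ) * ∫ τ in h₂..x, q τ * Real.sin (μ * (x - τ)) * w (g τ))
    (hμq : μ ≥ 2 * q₃) (hμ : 0 < μ) :
    ∀ x ∈ Set.Icc h₂ Real.pi, |w x| ≤ 32 * Real.sqrt 2 / |δ * θ| :=
  stmt_19_general h₂ μ q₃ A B θ δ q g w hwcont hqcont hq₃ hg hA hB heq hμq hμ
end
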